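/- Suppose D^k positive diagonal and B^k nonnegative irreducible for k = 1,2,3, with (D³)⁻¹B³ > (D²)⁻¹B² > (D¹)⁻¹B¹ entrywise, and let x̃³ with 0 ≪ x̃³ ≪ 1 satisfy (−D³ + (I − X̃³)B³)x̃³ = 0. Then there exists no triple (x̄¹, x̄², x̄³) with all 0 ≪ x̄^k ≪ 1 and x̄¹+x̄²+x̄³ ≪ 1 satisfying the three equilibrium equations 0 = (−D^k + (I − X̄¹ − X̄² − X̄³)B^k)x̄^k for k = 1, 2, 3. -/

import Mathlib

/-!
Write `Aₖ = (Dᵏ)⁻¹Bᵏ` and `s = x̄¹ + x̄² + x̄³`. The equilibrium equations say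
`x̄ᵏ = (1 - s) ⊙ Aₖ x̄ᵏ`, and `A₁ ≤ A₂ ≤ A₃` makes `s` a subsolution, `s ≤ (1 - s) ⊙ A₃ s`,
of the equation `x̃³ = (1 - x̃³) ⊙ A₃ x̃³`. Comparing the two at an index maximising `s / x̃³`
gives `s ≤ x̃³`. At an index minimising `x̄³ / x̃³` this forces `s = x̃³`, and the minimum
propagates along the positive entries of `A₃`, so by irreducibility `s = x̃³` everywhere.
The subsolution inequality is then an equality, so `(A₃ - A₂) x̄² = 0`, and `x̄² ≫ 0` gives
`A₃ = A₂`, contradicting `A₃ > A₂`.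
-/

open Matrix

/-- A nonnegative matrix is irreducible if for every `(i, j)` some power has a
strictly positive `(i, j)` entry. -/
def IrredNonneg {n : ℕ} (B : Matrix (Fin n) (Fin n) ℝ) : Prop :=
  (∀ i j, 0 ≤ B i j) ∧ ∀ i j, ∃ k : ℕ, 0 < (B ^ (k + 1)) i j

/-- `A > B` entrywise: `A ≥ B` with at least one strict inequality. -/
def MatGt {n : ℕ} (A B : Matrix (Fin n) (Fin n) ℝ) : Prop :=
  (∀ i j, B i j ≤ A i j) ∧ A ≠ B

namespace Matrix

variable {ι R : Type*} [Fintype ι]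

lemma pow_apply_eq_zero_of_mem_of_notMem [Semiring R] [DecidableEq ι] {B : Matrix ι ι R}
    {S : Set ι} (hS : ∀ i ∈ S, ∀ j ∉ S, B i j = 0) (k : ℕ) {i j : ι} (hi : i ∈ S)
    (hj : j ∉ S) : (B ^ k) i j = 0 := by
  induction k generalizing j with
  | zero => exact one_apply_ne (ne_of_mem_of_not_mem hi hj)
  | succ k ih =>
    rw [pow_succ, mul_apply]
    refine Finset.sum_eq_zero fun l _ => ?_
    by_cases hl : l ∈ S
    · rw [hS l hl j hj, mul_zero]
    · rw [ih hl, zero_mul]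

section Field

variable [Field R] [DecidableEq ι] {d : ι → R}

lemma inv_diagonal_of_ne_zero (hd : ∀ i, d i ≠ 0) :
    (diagonal d)⁻¹ = diagonal fun i => (d i)⁻¹ := by
  refine inv_eq_left_inv ?_
  rw [diagonal_mul_diagonal, ← diagonal_one]
  exact congrArg diagonal (funext fun i => inv_mul_cancel₀ (hd i))

lemma inv_diagonal_mul_apply (hd : ∀ i, d i ≠ 0) (B : Matrix ι ι R) (i j : ι) :
    ((diagonal d)⁻¹ * B) i j = (d i)⁻¹ * B i j := by
  rw [inv_diagonal_of_ne_zero hd, diagonal_mul]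

lemma inv_diagonal_mul_apply_nonneg [LinearOrder R] [IsStrictOrderedRing R]
    (hd : ∀ i, 0 < d i) {B : Matrix ι ι R} (hB : ∀ i j, 0 ≤ B i j) (i j : ι) :
    0 ≤ ((diagonal d)⁻¹ * B) i j := by
  rw [inv_diagonal_mul_apply fun i => (hd i).ne']
  exact mul_nonneg (inv_nonneg.2 (hd i).le) (hB i j)

end Field

section Order

variable [CommRing R] [LinearOrder R] [IsStrictOrderedRing R] {A : Matrix ι ι R}

lemma mulVec_apply_mono (hA : ∀ i j, 0 ≤ A i j) {v w : ι → R} (hvw : v ≤ w) (i : ι) :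
    (A *ᵥ v) i ≤ (A *ᵥ w) i :=
  dotProduct_le_dotProduct_of_nonneg_left hvw (hA i)

lemma mulVec_apply_nonneg (hA : ∀ i j, 0 ≤ A i j) {v : ι → R} (hv : 0 ≤ v) (i : ι) :
    0 ≤ (A *ᵥ v) i :=
  dotProduct_nonneg_of_nonneg (hA i) hv

lemma mul_eq_zero_of_mulVec_apply_eq_zero (hA : ∀ i j, 0 ≤ A i j) {w : ι → R} (hw : 0 ≤ w)
    {i : ι} (h : (A *ᵥ w) i = 0) (j : ι) : A i j * w j = 0 :=
  (Finset.sum_eq_zero_iff_of_nonneg fun j _ => mul_nonneg (hA i j) (hw j)).1 h j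
    (Finset.mem_univ j)

lemma eq_zero_of_nonneg_of_mulVec_eq_zero (hA : ∀ i j, 0 ≤ A i j) {x : ι → R}
    (hx : ∀ j, 0 < x j) (h : A *ᵥ x = 0) : A = 0 :=
  ext fun i j => (mul_eq_zero.1 (mul_eq_zero_of_mulVec_apply_eq_zero hA (fun j => (hx j).le)
    (congrFun h i) j)).resolve_right (hx j).ne'

end Order

end Matrix

section Equilibrium

variable {ι R : Type*} [Fintype ι]

lemma one_sub_mul_mulVec_add_eq [CommRing R] {A₁ A₂ A₃ : Matrix ι ι R}
    {x₁ x₂ x₃ : ι → R} {i : ι}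
    (h₁ : x₁ i = (1 - (x₁ + x₂ + x₃) i) * (A₁ *ᵥ x₁) i)
    (h₂ : x₂ i = (1 - (x₁ + x₂ + x₃) i) * (A₂ *ᵥ x₂) i)
    (h₃ : x₃ i = (1 - (x₁ + x₂ + x₃) i) * (A₃ *ᵥ x₃) i) :
    (1 - (x₁ + x₂ + x₃) i) * (A₃ *ᵥ (x₁ + x₂ + x₃)) i =
      (x₁ + x₂ + x₃) i +
        (1 - (x₁ + x₂ + x₃) i) * (((A₃ - A₁) *ᵥ x₁) i + ((A₃ - A₂) *ᵥ x₂) i) := by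
  simp only [mulVec_add, sub_mulVec, Pi.add_apply, Pi.sub_apply] at *
  linear_combination -h₁ - h₂ - h₃

variable [Field R]

lemma apply_eq_one_sub_mul_mulVec [DecidableEq ι] {d y v : ι → R} (hd : ∀ i, d i ≠ 0)
    {B : Matrix ι ι R} (h : (-diagonal d + (1 - diagonal y) * B) *ᵥ v = 0) (i : ι) :
    v i = (1 - y i) * (((diagonal d)⁻¹ * B) *ᵥ v) i := by
  have hi := congrFun h i
  rw [← mulVec_mulVec, inv_diagonal_of_ne_zero hd, mulVec_diagonal]
  simp only [add_mulVec, neg_mulVec, sub_mulVec, ← mulVec_mulVec, mulVec_diagonal,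
    one_mulVec, Pi.add_apply, Pi.neg_apply, Pi.sub_apply, Pi.zero_apply] at hi
  field_simp [hd i]
  linear_combination -hi

variable [LinearOrder R] [IsStrictOrderedRing R] {A : Matrix ι ι R} {t : ι → R}

lemma lt_one_and_mulVec_apply_pos (hA : ∀ i j, 0 ≤ A i j) (ht0 : ∀ i, 0 < t i)
    (ht : ∀ i, t i = (1 - t i) * (A *ᵥ t) i) (i : ι) : t i < 1 ∧ 0 < (A *ᵥ t) i := by
  have hS : 0 < (A *ᵥ t) i := by
    refine (mulVec_apply_nonneg hA (fun j => (ht0 j).le) i).lt_of_ne fun h => ?_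
    have := ht i
    rw [← h, mul_zero] at this
    exact (ht0 i).ne' this
  refine ⟨?_, hS⟩
  by_contra! h
  nlinarith [ht i, ht0 i]

theorem le_of_le_one_sub_mul_mulVec (hA : ∀ i j, 0 ≤ A i j) (ht0 : ∀ i, 0 < t i)
    (ht : ∀ i, t i = (1 - t i) * (A *ᵥ t) i) {s : ι → R} (hs1 : ∀ i, s i ≤ 1)
    (hs : ∀ i, s i ≤ (1 - s i) * (A *ᵥ s) i) : s ≤ t := by
  by_contra hst
  obtain ⟨i, hi⟩ : ∃ i, t i < s i := by simpa [Pi.le_def] using hst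
  have : Nonempty ι := ⟨i⟩
  obtain ⟨i₀, hmax⟩ := Finite.exists_max fun j => s j / t j
  set κ := s i₀ / t i₀
  have hκ : 1 < κ := ((one_lt_div (ht0 i)).2 hi).trans_le (hmax i)
  have hsκ : s ≤ κ • t := fun j => by
    simpa [mul_comm] using (div_le_iff₀ (ht0 j)).1 (hmax j)
  have hsi₀ : s i₀ = κ * t i₀ := (div_mul_cancel₀ _ (ht0 i₀).ne').symm
  clear_value κ
  obtain ⟨-, hS⟩ := lt_one_and_mulVec_apply_pos hA ht0 ht i₀
  have hAs : (A *ᵥ s) i₀ ≤ κ * (A *ᵥ t) i₀ := by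
    simpa [mulVec_smul] using mulVec_apply_mono hA hsκ i₀
  have h := (hs i₀).trans (mul_le_mul_of_nonneg_left hAs (sub_nonneg.2 (hs1 i₀)))
  rw [hsi₀] at h
  have hpos := mul_pos (mul_pos (mul_pos (zero_lt_one.trans hκ) hS) (ht0 i₀)) (sub_pos.2 hκ)
  have hnonpos : κ * (A *ᵥ t) i₀ * t i₀ * (κ - 1) ≤ 0 := by
    linear_combination h - κ * ht i₀
  exact hpos.not_ge hnonpos

theorem eq_and_forall_eq_zero_of_smul_le (hA : ∀ i j, 0 ≤ A i j) (ht0 : ∀ i, 0 < t i)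
    (ht : ∀ i, t i = (1 - t i) * (A *ᵥ t) i) {s x : ι → R} (hst : s ≤ t)
    (hx : ∀ i, x i = (1 - s i) * (A *ᵥ x) i) {μ : R} (hμ : μ • t ≤ x) {i : ι}
    (hxi : 0 < x i) (hi : x i = μ * t i) :
    s i = t i ∧ ∀ j, x j ≠ μ * t j → A i j = 0 := by
  obtain ⟨ht1, hS⟩ := lt_one_and_mulVec_apply_pos hA ht0 ht i
  have hμ0 : 0 < μ := pos_of_mul_pos_left (hi ▸ hxi) (ht0 i).le
  have hAx : μ * (A *ᵥ t) i ≤ (A *ᵥ x) i := by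
    simpa [mulVec_smul] using mulVec_apply_mono hA hμ i
  have hsi : s i = t i := by
    have h := mul_le_mul_of_nonneg_left hAx (sub_nonneg.2 ((hst i).trans ht1.le))
    have : μ * (A *ᵥ t) i * (t i - s i) ≤ 0 := by
      linear_combination h - hx i + hi + μ * ht i
    exact le_antisymm (hst i) (sub_nonpos.1 (nonpos_of_mul_nonpos_right this (mul_pos hμ0 hS)))
  refine ⟨hsi, fun j hj => ?_⟩
  have hzero : (A *ᵥ (x - μ • t)) i = 0 := by
    have hx' := hx i
    rw [hsi] at hx'
    have : (1 - t i) * ((A *ᵥ x) i - μ * (A *ᵥ t) i) = 0 := by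
      linear_combination -hx' + μ * ht i + hi
    rw [mulVec_sub, mulVec_smul, Pi.sub_apply, Pi.smul_apply, smul_eq_mul]
    exact (mul_eq_zero.1 this).resolve_left (sub_pos.2 ht1).ne'
  have := mul_eq_zero_of_mulVec_apply_eq_zero hA (sub_nonneg.2 hμ) hzero j
  simp only [Pi.sub_apply, Pi.smul_apply, smul_eq_mul, mul_eq_zero, sub_eq_zero] at this
  exact this.resolve_right hj

end Equilibrium

theorem IrredNonneg.eq_univ {n : ℕ} {B : Matrix (Fin n) (Fin n) ℝ} (hB : IrredNonneg B)
    {S : Set (Fin n)} (hS : S.Nonempty) (hSB : ∀ i ∈ S, ∀ j ∉ S, B i j = 0) :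
    S = Set.univ := by
  obtain ⟨i, hi⟩ := hS
  refine Set.eq_univ_of_forall fun j => ?_
  by_contra hj
  obtain ⟨k, hk⟩ := hB.2 i j
  exact hk.ne' (pow_apply_eq_zero_of_mem_of_notMem hSB (k + 1) hi hj)

theorem eq_of_irredNonneg {n : ℕ} {d : Fin n → ℝ} (hd : ∀ i, 0 < d i)
    {B : Matrix (Fin n) (Fin n) ℝ} (hB : IrredNonneg B) {s t x : Fin n → ℝ}
    (ht0 : ∀ i, 0 < t i) (ht : ∀ i, t i = (1 - t i) * (((diagonal d)⁻¹ * B) *ᵥ t) i)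
    (hx0 : ∀ i, 0 < x i) (hx : ∀ i, x i = (1 - s i) * (((diagonal d)⁻¹ * B) *ᵥ x) i)
    (hst : s ≤ t) : s = t := by
  cases isEmpty_or_nonempty (Fin n)
  · exact Subsingleton.elim _ _
  have hA := inv_diagonal_mul_apply_nonneg hd hB.1
  obtain ⟨i₀, hmin⟩ := Finite.exists_min fun j => x j / t j
  set μ := x i₀ / t i₀
  have hμ : μ • t ≤ x := fun j => by
    simpa using (le_div_iff₀ (ht0 j)).1 (hmin j)
  have hratio := fun i (hi : i ∈ {j | x j = μ * t j}) =>
    eq_and_forall_eq_zero_of_smul_le hA ht0 ht hst hx hμ (hx0 i) hi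
  have hall : {j | x j = μ * t j} = Set.univ := by
    refine hB.eq_univ ⟨i₀, (div_mul_cancel₀ _ (ht0 i₀).ne').symm⟩ fun i hi j hj => ?_
    have := (hratio i hi).2 j hj
    rw [inv_diagonal_mul_apply fun i => (hd i).ne'] at this
    exact (mul_eq_zero.1 this).resolve_left (inv_ne_zero (hd i).ne')
  exact funext fun i => (hratio i (hall ▸ Set.mem_univ i)).1

theorem stmt10_general (n : ℕ) (d1 d2 d3 : Fin n → ℝ)
    (hd1 : ∀ i, 0 < d1 i) (hd2 : ∀ i, 0 < d2 i) (hd3 : ∀ i, 0 < d3 i)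
    (B1 B2 B3 : Matrix (Fin n) (Fin n) ℝ)
    (hB3 : IrredNonneg B3)
    (hlt32 : MatGt ((Matrix.diagonal d3)⁻¹ * B3) ((Matrix.diagonal d2)⁻¹ * B2))
    (hlt21 : MatGt ((Matrix.diagonal d2)⁻¹ * B2) ((Matrix.diagonal d1)⁻¹ * B1))
    (xt3 : Fin n → ℝ) (hxt3 : ∀ i, 0 < xt3 i ∧ xt3 i < 1)
    (heqt : (-(Matrix.diagonal d3) +
      ((1 : Matrix (Fin n) (Fin n) ℝ) - Matrix.diagonal xt3) * B3) *ᵥ xt3 = 0) :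
    ¬ ∃ x1 x2 x3 : Fin n → ℝ,
      (∀ i, 0 < x1 i ∧ x1 i < 1) ∧ (∀ i, 0 < x2 i ∧ x2 i < 1) ∧
      (∀ i, 0 < x3 i ∧ x3 i < 1) ∧ (∀ i, x1 i + x2 i + x3 i < 1) ∧
      (-(Matrix.diagonal d1) +
        ((1 : Matrix (Fin n) (Fin n) ℝ) - Matrix.diagonal x1
          - Matrix.diagonal x2 - Matrix.diagonal x3) * B1) *ᵥ x1 = 0 ∧
      (-(Matrix.diagonal d2) +
        ((1 : Matrix (Fin n) (Fin n) ℝ) - Matrix.diagonal x1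
          - Matrix.diagonal x2 - Matrix.diagonal x3) * B2) *ᵥ x2 = 0 ∧
      (-(Matrix.diagonal d3) +
        ((1 : Matrix (Fin n) (Fin n) ℝ) - Matrix.diagonal x1
          - Matrix.diagonal x2 - Matrix.diagonal x3) * B3) *ᵥ x3 = 0 := by
  rintro ⟨x1, x2, x3, hx1, hx2, hx3, hs1, he1, he2, he3⟩
  rw [sub_sub, sub_sub, ← add_assoc, diagonal_add, diagonal_add] at he1 he2 he3
  have E1 := apply_eq_one_sub_mul_mulVec (fun i => (hd1 i).ne') he1
  have E2 := apply_eq_one_sub_mul_mulVec (fun i => (hd2 i).ne') he2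
  have E3 := apply_eq_one_sub_mul_mulVec (fun i => (hd3 i).ne') he3
  have Et := apply_eq_one_sub_mul_mulVec (fun i => (hd3 i).ne') heqt
  have hdefect := fun i => one_sub_mul_mulVec_add_eq (E1 i) (E2 i) (E3 i)
  set A1 := (diagonal d1)⁻¹ * B1
  set A2 := (diagonal d2)⁻¹ * B2
  set A3 := (diagonal d3)⁻¹ * B3
  set s := x1 + x2 + x3
  have hgap1 : ∀ i, 0 ≤ ((A3 - A1) *ᵥ x1) i := mulVec_apply_nonneg
    (fun i j => sub_nonneg.2 ((hlt21.1 i j).trans (hlt32.1 i j))) fun j => (hx1 j).1.le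
  have hgap2 : ∀ i, 0 ≤ ((A3 - A2) *ᵥ x2) i := mulVec_apply_nonneg
    (fun i j => sub_nonneg.2 (hlt32.1 i j)) fun j => (hx2 j).1.le
  have hst : s ≤ xt3 := le_of_le_one_sub_mul_mulVec (inv_diagonal_mul_apply_nonneg hd3 hB3.1)
    (fun i => (hxt3 i).1) Et (fun i => (hs1 i).le) fun i => by
      rw [hdefect i]
      exact le_add_of_nonneg_right
        (mul_nonneg (sub_nonneg.2 (hs1 i).le) (add_nonneg (hgap1 i) (hgap2 i)))
  have hseq : s = xt3 :=
    eq_of_irredNonneg hd3 hB3 (fun i => (hxt3 i).1) Et (fun i => (hx3 i).1) E3 hst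
  have h32 : (A3 - A2) *ᵥ x2 = 0 := by
    funext i
    rw [Pi.zero_apply]
    have h := hdefect i
    rw [hseq, ← Et i, left_eq_add, mul_eq_zero] at h
    have := h.resolve_left (sub_pos.2 (hxt3 i).2).ne'
    linarith [hgap1 i, hgap2 i]
  exact hlt32.2 (sub_eq_zero.1 (eq_zero_of_nonneg_of_mulVec_eq_zero
    (fun i j => sub_nonneg.2 (hlt32.1 i j)) (fun j => (hx2 j).1) h32))

/-- If `(D³)⁻¹B³ > (D²)⁻¹B² > (D¹)⁻¹B¹` entrywise and `x̃³` is the single-virus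
endemic equilibrium of virus 3, then no 3-coexistence equilibrium exists. -/
theorem stmt10 (n : ℕ) (d1 d2 d3 : Fin n → ℝ)
    (hd1 : ∀ i, 0 < d1 i) (hd2 : ∀ i, 0 < d2 i) (hd3 : ∀ i, 0 < d3 i)
    (B1 B2 B3 : Matrix (Fin n) (Fin n) ℝ)
    (hB1 : IrredNonneg B1) (hB2 : IrredNonneg B2) (hB3 : IrredNonneg B3)
    (hlt32 : MatGt ((Matrix.diagonal d3)⁻¹ * B3) ((Matrix.diagonal d2)⁻¹ * B2))
    (hlt21 : MatGt ((Matrix.diagonal d2)⁻¹ * B2) ((Matrix.diagonal d1)⁻¹ * B1))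
    (xt3 : Fin n → ℝ) (hxt3 : ∀ i, 0 < xt3 i ∧ xt3 i < 1)
    (heqt : (-(Matrix.diagonal d3) +
      ((1 : Matrix (Fin n) (Fin n) ℝ) - Matrix.diagonal xt3) * B3) *ᵥ xt3 = 0) :
    ¬ ∃ x1 x2 x3 : Fin n → ℝ,
      (∀ i, 0 < x1 i ∧ x1 i < 1) ∧ (∀ i, 0 < x2 i ∧ x2 i < 1) ∧
      (∀ i, 0 < x3 i ∧ x3 i < 1) ∧ (∀ i, x1 i + x2 i + x3 i < 1) ∧
      (-(Matrix.diagonal d1) +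
        ((1 : Matrix (Fin n) (Fin n) ℝ) - Matrix.diagonal x1
          - Matrix.diagonal x2 - Matrix.diagonal x3) * B1) *ᵥ x1 = 0 ∧
      (-(Matrix.diagonal d2) +
        ((1 : Matrix (Fin n) (Fin n) ℝ) - Matrix.diagonal x1
          - Matrix.diagonal x2 - Matrix.diagonal x3) * B2) *ᵥ x2 = 0 ∧
      (-(Matrix.diagonal d3) +
        ((1 : Matrix (Fin n) (Fin n) ℝ) - Matrix.diagonal x1
          - Matrix.diagonal x2 - Matrix.diagonal x3) * B3) *ᵥ x3 = 0 :=
  stmt10_general n d1 d2 d3 hd1 hd2 hd3 B1 B2 B3 hB3 hlt32 hlt21 xt3 hxt3 heqt
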